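/- Let M ⊆ S_k^n be a normalized (⊓,⊔)-closed set, and for each i let J_i = {x ∈ J(M) : supp x̄ = {i}}. Then for distinct x, y ∈ J(M), the pair {x, y} is minimally inconsistent if and only if x and y belong to the same part J_i for some i ∈ {1,…,n}. -/

import Mathlib

/-- The partial order on `S_k = {0,1,…,k}`: `a ⪯ b` iff `a = 0` or `a = b`. -/
def pre {k : ℕ} (a b : Fin (k + 1)) : Prop := a = 0 ∨ a = b

instance {k : ℕ} (a b : Fin (k + 1)) : Decidable (pre a b) :=
  decidable_of_iff (a = 0 ∨ a = b) Iff.rfl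

/-- The componentwise order `⪯` on `S_k^n`. -/
def preV {k n : ℕ} (x y : Fin n → Fin (k + 1)) : Prop := ∀ i, pre (x i) (y i)

/-- The operation `⊓` on `S_k^n`. -/
def sqcap {k n : ℕ} (x y : Fin n → Fin (k + 1)) : Fin n → Fin (k + 1) :=
  fun i => if pre (x i) (y i) ∨ pre (y i) (x i) then min (x i) (y i) else 0

/-- The operation `⊔` on `S_k^n`. -/
def sqcup {k n : ℕ} (x y : Fin n → Fin (k + 1)) : Fin n → Fin (k + 1) :=
  fun i => if pre (x i) (y i) ∨ pre (y i) (x i) then max (x i) (y i) else 0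

/-- A `(⊓,⊔)`-closed subset of `S_k^n`. -/
def closedSet {k n : ℕ} (M : Set (Fin n → Fin (k + 1))) : Prop :=
  M.Nonempty ∧ ∀ x ∈ M, ∀ y ∈ M, sqcap x y ∈ M ∧ sqcup x y ∈ M

/-- Strict version of `⪯`. -/
def strictPreV {k n : ℕ} (x y : Fin n → Fin (k + 1)) : Prop := preV x y ∧ x ≠ y

/-- `m` is the minimum element of `M` with respect to `⪯`. -/
def isMinOf {k n : ℕ} (M : Set (Fin n → Fin (k + 1))) (m : Fin n → Fin (k + 1)) : Prop :=
  m ∈ M ∧ ∀ x ∈ M, preV m x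

/-- `u` is the least upper bound of `S` inside `(M, ⪯)`. -/
def isLUBof {k n : ℕ} (M S : Set (Fin n → Fin (k + 1))) (u : Fin n → Fin (k + 1)) : Prop :=
  u ∈ M ∧ (∀ s ∈ S, preV s u) ∧ ∀ w ∈ M, (∀ s ∈ S, preV s w) → preV u w

/-- `x` is a join-irreducible element of `M`. -/
def joinIrr {k n : ℕ} (M : Set (Fin n → Fin (k + 1))) (x : Fin n → Fin (k + 1)) : Prop :=
  x ∈ M ∧ ¬ isMinOf M x ∧ ¬ isLUBof M {y | y ∈ M ∧ strictPreV y x} x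

/-- A `(⊓,⊔)`-closed set is simple if its minimum element is the all-zero vector. -/
def simpleSet {k n : ℕ} (M : Set (Fin n → Fin (k + 1))) : Prop :=
  isMinOf M (fun _ => 0)

/-- `y` is a lower cover of `x` in `M`. -/
def lowerCover {k n : ℕ} (M : Set (Fin n → Fin (k + 1)))
    (y x : Fin n → Fin (k + 1)) : Prop :=
  y ∈ M ∧ strictPreV y x ∧ ¬ ∃ z ∈ M, strictPreV y z ∧ strictPreV z x

/-- `d` is the differential of `x` in `M` (with respect to some lower cover of `x`). -/
def isDiff {k n : ℕ} (M : Set (Fin n → Fin (k + 1)))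
    (x d : Fin n → Fin (k + 1)) : Prop :=
  ∃ y, lowerCover M y x ∧ ∀ i, d i = if x i ≠ 0 ∧ y i = 0 then x i else 0

/-- The support of `x ∈ S_k^n`. -/
def supp {k n : ℕ} (x : Fin n → Fin (k + 1)) : Set (Fin n) := {i | x i ≠ 0}

/-- `x ⌣ y`: `x` and `y` have no common upper bound in `S_k^n`. -/
def incons {k n : ℕ} (x y : Fin n → Fin (k + 1)) : Prop :=
  ∃ i, x i ≠ 0 ∧ y i ≠ 0 ∧ x i ≠ y i

/-- A simple `(⊓,⊔)`-closed set is normalized if the differential of every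
join-irreducible element has exactly one nonzero component. -/
def normalizedSet {k n : ℕ} (M : Set (Fin n → Fin (k + 1))) : Prop :=
  simpleSet M ∧ ∀ x, joinIrr M x → ∃ d, isDiff M x d ∧ ∃! i, d i ≠ 0

/-- `J_i`: the set of join-irreducible elements of `M` whose differential has
support `{i}`. -/
def Ji {k n : ℕ} (M : Set (Fin n → Fin (k + 1))) (i : Fin n) :
    Set (Fin n → Fin (k + 1)) :=
  {x | joinIrr M x ∧ ∃ d, isDiff M x d ∧ supp d = {i}}

/-- A pair `{x, y}` of distinct join-irreducibles is minimally inconsistent: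
`x ⌣ y` and no strictly smaller inconsistent pair of join-irreducibles exists
below it. -/
def minInc {k n : ℕ} (M : Set (Fin n → Fin (k + 1)))
    (x y : Fin n → Fin (k + 1)) : Prop :=
  incons x y ∧ ∀ x' y', joinIrr M x' → joinIrr M y' →
    preV x' x → preV y' y → incons x' y' → x' = x ∧ y' = y


/-!
Given `m ∈ M` with `m j ≠ 0`, take `q ⪯ m` in `M` with `q j = m j` and as few nonzero coordinates
as possible. Everything strictly below `q` vanishes at `j`, so `q` is join-irreducible and its
differential is nonzero at `j`: `q ∈ J_j`. Thus an inconsistent pair clashing at `j` dominates a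
pair in `J_j`, and minimality puts the pair itself in `J_j`.

Conversely, `x ∈ J_i` has a greatest element strictly below it, which agrees with `x` off `i` and
vanishes at `i`. Hence `x` is the only element of `M` below `x` that is nonzero at `i`, and `x` is
consistent with every element of `M` vanishing at `i`; so two elements of `J_i` clash only at `i`.
-/

section

variable {k n : ℕ}

theorem preV_refl (x : Fin n → Fin (k + 1)) : preV x x := fun _ => Or.inr rfl

theorem preV_trans {x y z : Fin n → Fin (k + 1)} (hxy : preV x y) (hyz : preV y z) :
    preV x z := fun l => (hxy l).elim Or.inl fun h => h ▸ hyz l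

theorem preV.apply_eq {x y : Fin n → Fin (k + 1)} (h : preV x y) {l : Fin n} (hl : x l ≠ 0) :
    x l = y l :=
  (h l).resolve_left hl

theorem sqcap_apply (x y : Fin n → Fin (k + 1)) (l : Fin n) :
    sqcap x y l = if x l = y l then x l else 0 := by
  simp only [sqcap, pre]
  split_ifs <;> grind [Fin.zero_le]

theorem sqcup_apply (x y : Fin n → Fin (k + 1)) (l : Fin n) :
    sqcup x y l = if x l = 0 then y l else if y l = 0 ∨ x l = y l then x l else 0 := by
  simp only [sqcup, pre]
  split_ifs <;> grind [Fin.zero_le]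

theorem sqcap_preV_left (x y : Fin n → Fin (k + 1)) : preV (sqcap x y) x := by
  intro l; simp only [pre, sqcap_apply]; split_ifs <;> simp

theorem sqcap_preV_right (x y : Fin n → Fin (k + 1)) : preV (sqcap x y) y := by
  intro l; simp only [pre, sqcap_apply]; split_ifs <;> simp [*]

theorem preV_sqcap {x y z : Fin n → Fin (k + 1)} (hx : preV z x) (hy : preV z y) :
    preV z (sqcap x y) := by
  intro l; have := hx l; have := hy l; simp only [pre, sqcap_apply] at *; split_ifs <;> grind

theorem preV_of_sqcap_eq_left {x y : Fin n → Fin (k + 1)} (h : sqcap x y = x) : preV x y := by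
  intro l; have := congrFun h l; simp only [pre, sqcap_apply] at *; split_ifs at this <;> grind

section compatible

variable {x y m : Fin n → Fin (k + 1)}

theorem sqcup_preV (hx : preV x m) (hy : preV y m) : preV (sqcup x y) m := by
  intro l; have := hx l; have := hy l; simp only [pre, sqcup_apply] at *; split_ifs <;> grind

theorem preV_sqcup_left (hx : preV x m) (hy : preV y m) : preV x (sqcup x y) := by
  intro l; have := hx l; have := hy l; simp only [pre, sqcup_apply] at *; split_ifs <;> grind

theorem preV_sqcup_right (hx : preV x m) (hy : preV y m) : preV y (sqcup x y) := by
  intro l; have := hx l; have := hy l; simp only [pre, sqcup_apply] at *; split_ifs <;> grind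

end compatible

theorem hammingNorm_lt_of_strictPreV {x y : Fin n → Fin (k + 1)} (h : strictPreV x y) :
    hammingNorm x < hammingNorm y := by
  obtain ⟨hle, hne⟩ := h
  obtain ⟨l, hl⟩ := Function.ne_iff.mp hne
  have hxl : x l = 0 := (hle l).resolve_right hl
  refine Finset.card_lt_card ⟨fun i hi => ?_, fun hsub => ?_⟩
  · simp only [Finset.mem_filter, Finset.mem_univ, true_and] at hi ⊢
    rwa [← hle.apply_eq hi]
  · have hxl' := @hsub l (by simp only [Finset.mem_filter, Finset.mem_univ, true_and]; grind)
    simp [hxl] at hxl'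

variable {M : Set (Fin n → Fin (k + 1))}

theorem joinIrr_of_forall_strictPreV_apply_eq_zero (hM : closedSet M) (hs : simpleSet M)
    {m : Fin n → Fin (k + 1)} (hm : m ∈ M) {j : Fin n} (hmj : m j ≠ 0)
    (hlow : ∀ z ∈ M, strictPreV z m → z j = 0) : joinIrr M m := by
  refine ⟨hm, fun hmin => hmj ((hmin.2 _ hs.1 j).elim id id), fun hlub => ?_⟩
  -- A heaviest `u ⪯ m` in `M` with `u j = 0` absorbs every `z ≺ m` under `⊔`, so it bounds
  -- them; yet `m ⋠ u`.
  obtain ⟨u, ⟨huM, hum, huj⟩, hmax⟩ := Set.exists_max_image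
    {w | w ∈ M ∧ preV w m ∧ w j = 0} hammingNorm (Set.toFinite _) ⟨_, hs.1, hs.2 m hm, rfl⟩
  have hub : ∀ z ∈ {y | y ∈ M ∧ strictPreV y m}, preV z u := by
    rintro z ⟨hzM, hzm⟩
    have hsup : sqcup z u = u := by
      by_contra hne
      have hlt := hammingNorm_lt_of_strictPreV ⟨preV_sqcup_right hzm.1 hum, Ne.symm hne⟩
      have hle := hmax (sqcup z u) ⟨(hM.2 z hzM u huM).2, sqcup_preV hzm.1 hum,
        by simp [sqcup_apply, hlow z hzM hzm, huj]⟩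
      omega
    exact hsup ▸ preV_sqcup_left hzm.1 hum
  exact hmj (((hlub.2.2 u huM hub).apply_eq hmj).trans huj)

theorem exists_mem_Ji_preV (hM : closedSet M) (hnorm : normalizedSet M)
    {m : Fin n → Fin (k + 1)} (hm : m ∈ M) {j : Fin n} (hmj : m j ≠ 0) :
    ∃ q ∈ Ji M j, preV q m ∧ q j = m j := by
  obtain ⟨q, ⟨hqM, hqm, hqj⟩, hmin⟩ := Set.exists_min_image
    {w | w ∈ M ∧ preV w m ∧ w j = m j} hammingNorm (Set.toFinite _) ⟨m, hm, preV_refl m, rfl⟩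
  have hqj0 : q j ≠ 0 := hqj ▸ hmj
  have hlow : ∀ z ∈ M, strictPreV z q → z j = 0 := fun z hzM hzq => by
    by_contra hzj
    have hle := hmin z ⟨hzM, preV_trans hzq.1 hqm, (hzq.1.apply_eq hzj).trans hqj⟩
    have hlt := hammingNorm_lt_of_strictPreV hzq
    omega
  have hq : joinIrr M q := joinIrr_of_forall_strictPreV_apply_eq_zero hM hnorm.1 hqM hqj0 hlow
  obtain ⟨d, ⟨y, hy, hd⟩, hd1⟩ := hnorm.2 q hq
  have hdj : d j ≠ 0 := by rw [hd j, if_pos ⟨hqj0, hlow y hy.1 hy.2.1⟩]; exact hqj0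
  refine ⟨q, ⟨hq, d, ⟨y, hy, hd⟩, ?_⟩, hqm, hqj⟩
  ext l
  exact ⟨fun hl => hd1.unique hl hdj, fun hl => hl ▸ hdj⟩

theorem joinIrr.exists_greatest_strictPreV (hM : closedSet M) {x : Fin n → Fin (k + 1)}
    (hx : joinIrr M x) : ∃ u ∈ M, strictPreV u x ∧ ∀ z ∈ M, strictPreV z x → preV z u := by
  obtain ⟨hxM, -, hnlub⟩ := hx
  simp only [isLUBof, not_and, not_forall] at hnlub
  obtain ⟨w, hwM, hub, hxw⟩ := hnlub hxM fun z hz => hz.2.1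
  exact ⟨sqcap x w, (hM.2 x hxM w hwM).1,
    ⟨sqcap_preV_left x w, fun h => hxw (preV_of_sqcap_eq_left h)⟩,
    fun z hzM hzx => preV_sqcap hzx.1 (hub z ⟨hzM, hzx⟩)⟩

section Ji

variable {i : Fin n} {x : Fin n → Fin (k + 1)}

theorem exists_greatest_strictPreV_of_mem_Ji (hM : closedSet M) (hx : x ∈ Ji M i) :
    x i ≠ 0 ∧ ∃ u ∈ M, u i = 0 ∧ (∀ l ≠ i, u l = x l) ∧
      ∀ z ∈ M, strictPreV z x → preV z u := by
  obtain ⟨hji, d, ⟨y, ⟨hyM, hyx, hcov⟩, hd⟩, hsupp⟩ := hx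
  obtain ⟨u, huM, hux, hmax⟩ := hji.exists_greatest_strictPreV hM
  obtain rfl : y = u := by
    by_contra hne
    exact hcov ⟨u, huM, ⟨hmax y hyM hyx, hne⟩, hux⟩
  have hsupp' : ∀ l, d l ≠ 0 ↔ l = i := fun l => Set.ext_iff.mp hsupp l
  have hdi := (hsupp' i).mpr rfl
  have hcond : x i ≠ 0 ∧ y i = 0 := by
    by_contra h
    rw [hd i, if_neg h] at hdi
    exact hdi rfl
  refine ⟨hcond.1, y, hyM, hcond.2, fun l hl => ?_, hmax⟩
  have hdl := mt (hsupp' l).mp hl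
  rw [hd l, not_not] at hdl
  rcases hyx.1 l with h | h <;> grind

theorem apply_ne_zero_of_mem_Ji (hM : closedSet M) (hx : x ∈ Ji M i) : x i ≠ 0 :=
  (exists_greatest_strictPreV_of_mem_Ji hM hx).1

theorem eq_of_mem_Ji_of_preV (hM : closedSet M) (hx : x ∈ Ji M i)
    {z : Fin n → Fin (k + 1)} (hz : z ∈ M) (hzx : preV z x) (hzi : z i ≠ 0) : z = x := by
  obtain ⟨-, u, -, hui, -, hmax⟩ := exists_greatest_strictPreV_of_mem_Ji hM hx
  by_contra hne
  exact hzi (((hmax z hz ⟨hzx, hne⟩).apply_eq hzi).trans hui)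

theorem not_incons_of_mem_Ji (hM : closedSet M) (hx : x ∈ Ji M i)
    {b : Fin n → Fin (k + 1)} (hb : b ∈ M) (hbi : b i = 0) : ¬ incons x b := by
  rintro ⟨l, hxl, hbl, hne⟩
  -- `(x ⊔ b) ⊓ x` is nonzero at `i`, hence equals `x`, but it vanishes at the clash `l`.
  have hxi := apply_ne_zero_of_mem_Ji hM hx
  have hw := eq_of_mem_Ji_of_preV hM hx (hM.2 _ (hM.2 x hx.1.1 b hb).2 x hx.1.1).1
    (sqcap_preV_right _ x) (by simp [sqcap_apply, sqcup_apply, hbi, hxi])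
  have hwl := congrFun hw l
  simp [sqcap_apply, sqcup_apply, hxl, hbl, hne] at hwl
  exact hxl hwl.symm

theorem apply_ne_of_mem_Ji (hM : closedSet M) (hx : x ∈ Ji M i)
    {y : Fin n → Fin (k + 1)} (hy : y ∈ Ji M i) (hxy : x ≠ y) : x i ≠ y i := by
  intro he
  have hxi := apply_ne_zero_of_mem_Ji hM hx
  have hmeet := (hM.2 x hx.1.1 y hy.1.1).1
  have hi : sqcap x y i ≠ 0 := by rwa [sqcap_apply, if_pos he]
  exact hxy ((eq_of_mem_Ji_of_preV hM hx hmeet (sqcap_preV_left x y) hi).symm.trans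
    (eq_of_mem_Ji_of_preV hM hy hmeet (sqcap_preV_right x y) hi))

theorem eq_of_mem_Ji_of_apply_ne (hM : closedSet M) (hx : x ∈ Ji M i)
    {y : Fin n → Fin (k + 1)} (hy : y ∈ Ji M i) {j : Fin n} (hxj : x j ≠ 0) (hyj : y j ≠ 0)
    (hxyj : x j ≠ y j) : j = i := by
  by_contra hji
  obtain ⟨-, u, huM, hui, hu, -⟩ := exists_greatest_strictPreV_of_mem_Ji hM hy
  exact not_incons_of_mem_Ji hM hx huM hui ⟨j, hxj, hu j hji ▸ hyj, hu j hji ▸ hxyj⟩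

end Ji

end

theorem minimally_inconsistent_iff_same_part_general (k n : ℕ)
    (M : Set (Fin n → Fin (k + 1))) (hM : closedSet M) (hnorm : normalizedSet M)
    (x y : Fin n → Fin (k + 1)) (hx : joinIrr M x) (hy : joinIrr M y)
    (hxy : x ≠ y) :
    minInc M x y ↔ ∃ i, x ∈ Ji M i ∧ y ∈ Ji M i := by
  constructor
  · rintro ⟨⟨j, hxj, hyj, hne⟩, hmin⟩
    obtain ⟨x', hx'J, hx'x, hx'j⟩ := exists_mem_Ji_preV hM hnorm hx.1 hxj
    obtain ⟨y', hy'J, hy'y, hy'j⟩ := exists_mem_Ji_preV hM hnorm hy.1 hyj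
    obtain ⟨rfl, rfl⟩ := hmin x' y' hx'J.1 hy'J.1 hx'x hy'y
      ⟨j, hx'j ▸ hxj, hy'j ▸ hyj, hx'j ▸ hy'j ▸ hne⟩
    exact ⟨j, hx'J, hy'J⟩
  · rintro ⟨i, hxi, hyi⟩
    refine ⟨⟨i, apply_ne_zero_of_mem_Ji hM hxi, apply_ne_zero_of_mem_Ji hM hyi,
      apply_ne_of_mem_Ji hM hxi hyi hxy⟩, fun x' y' hx' hy' hx'x hy'y ⟨j, hx'j, hy'j, hne⟩ => ?_⟩
    have hxj := hx'x.apply_eq hx'j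
    have hyj := hy'y.apply_eq hy'j
    obtain rfl := eq_of_mem_Ji_of_apply_ne hM hxi hyi (hxj ▸ hx'j) (hyj ▸ hy'j) (hxj ▸ hyj ▸ hne)
    exact ⟨eq_of_mem_Ji_of_preV hM hxi hx'.1 hx'x hx'j, eq_of_mem_Ji_of_preV hM hyi hy'.1 hy'y hy'j⟩

/-- (EP0): in a normalized `(⊓,⊔)`-closed set, a pair of distinct
join-irreducibles is minimally inconsistent iff both lie in the same part
`J_i`. -/
theorem minimally_inconsistent_iff_same_part (k n : ℕ) (hk : 0 < k) (hn : 0 < n)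
    (M : Set (Fin n → Fin (k + 1))) (hM : closedSet M) (hnorm : normalizedSet M)
    (x y : Fin n → Fin (k + 1)) (hx : joinIrr M x) (hy : joinIrr M y)
    (hxy : x ≠ y) :
    minInc M x y ↔ ∃ i, x ∈ Ji M i ∧ y ∈ Ji M i :=
  minimally_inconsistent_iff_same_part_general k n M hM hnorm x y hx hy hxy
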